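/- arXiv:1303.6491 — 2 statements merged into one kernel-verified Lean document; each statement's English description precedes it below -/
import Mathlib

section
/- Let R = ((ℓ_1,…,ℓ_d),(u_1,…,u_{d+1})) be a constructible special point data of level d with q nodes, let ℓ ∈ {1,…,q}, and let (v_1,…,v_{d+1}) be the reordering of (u_1,…,u_{d+1}) that is increasing for the relation <_ℓ relative to the node labels of R. Then for every j = 1,…,d one has a^ℓ_{v_j}(R) ≥ a^ℓ_{v_{j+1}}(R). -/
/-!
By induction on the construction, every constructible datum satisfies two facts for every `ℓ`:
`a^ℓ` reverses `<_ℓ`, and the values of `a^ℓ` on its tuples differ by at most one.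
Appending the new coordinate raises `a^ℓ` by one only for `ℓ = ℓ_{d+1}` and only on the tuples
that receive a `2`. Those are the last ones in the `<_{ℓ_{d+1}}`-sorted order, where, by the
first fact, `a^{ℓ_{d+1}}` is already smallest; hence both facts survive the step.
-/

/-- The relation `u <_ℓ u'` on `{1,2}^d`, relative to node labels `lab : Fin d → ℕ`. -/
def ltNode {d : ℕ} (lab : Fin d → ℕ) (ℓ : ℕ) (u u' : Fin d → ℕ) : Prop :=
  (∃ k₀ : Fin d, lab k₀ = ℓ ∧ u k₀ = 2 ∧ u' k₀ = 1 ∧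
      ∀ k : Fin d, k₀ < k → lab k = ℓ → u k = u' k) ∨
  ((∀ k : Fin d, lab k = ℓ → u k = u' k) ∧
    ∃ k₀ : Fin d, lab k₀ ≠ ℓ ∧ u k₀ = 1 ∧ u' k₀ = 2 ∧
      ∀ k : Fin d, k < k₀ → u k = u' k)

/-- Constructible special point data of level `d` with `q` nodes. -/
inductive Constructible (q : ℕ) :
    (d : ℕ) → (Fin d → ℕ) → (Fin (d + 1) → Fin d → ℕ) → Prop
  | base (ℓ : ℕ) (h1 : 1 ≤ ℓ) (hq : ℓ ≤ q) :
      Constructible q 1 (fun _ => ℓ) ![![1], ![2]]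
  | step {d : ℕ} {lab : Fin d → ℕ} {u : Fin (d + 1) → Fin d → ℕ}
      (hR : Constructible q d lab u) (ℓ : ℕ) (h1 : 1 ≤ ℓ) (hq : ℓ ≤ q)
      (v : Fin (d + 1) → Fin d → ℕ) (σ : Equiv.Perm (Fin (d + 1)))
      (hv : ∀ j, v j = u (σ j))
      (hsort : ∀ i j : Fin (d + 1), i < j → ltNode lab ℓ (v i) (v j))
      (h : ℕ) (hh1 : 1 ≤ h) (hh2 : h ≤ d + 1) :
      Constructible q (d + 1) (Fin.snoc lab ℓ)
        (fun j : Fin (d + 2) =>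
          if hj : (j : ℕ) < h then Fin.snoc (v ⟨(j : ℕ), by omega⟩) 1
          else Fin.snoc (v ⟨(j : ℕ) - 1, by omega⟩) 2)

/-- `a^ℓ_u(R)`: the number of `k` with `ℓ_k = ℓ` and `u(k) = 2`. -/
def aCount {d : ℕ} (lab : Fin d → ℕ) (ℓ : ℕ) (u : Fin d → ℕ) : ℕ :=
  (Finset.univ.filter (fun k : Fin d => lab k = ℓ ∧ u k = 2)).card

/-- `|a_u(R)|`: the number of `k` with `u(k) = 2`. -/
def aTot {d : ℕ} (u : Fin d → ℕ) : ℕ :=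
  (Finset.univ.filter (fun k : Fin d => u k = 2)).card

/-- Lexicographic order on tuples, comparing at the smallest coordinate where they differ. -/
def lexLt {d : ℕ} (u u' : Fin d → ℕ) : Prop :=
  ∃ k₀ : Fin d, (∀ k : Fin d, k < k₀ → u k = u' k) ∧ u k₀ < u' k₀

lemma aCount_snoc {d : ℕ} (lab : Fin d → ℕ) (ℓ' ℓ : ℕ) (x : Fin d → ℕ) (ε : ℕ) :
    aCount (Fin.snoc lab ℓ') ℓ (Fin.snoc x ε)
      = aCount lab ℓ x + if ℓ' = ℓ ∧ ε = 2 then 1 else 0 := by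
  simp only [aCount, Finset.card_filter, Fin.sum_univ_castSucc, Fin.snoc_castSucc, Fin.snoc_last]

lemma aCount_congr {d : ℕ} {lab : Fin d → ℕ} {ℓ : ℕ} {x y : Fin d → ℕ}
    (hxy : ∀ k, lab k = ℓ → x k = y k) : aCount lab ℓ x = aCount lab ℓ y := by
  unfold aCount
  congr 1
  ext k
  simp only [Finset.mem_filter, Finset.mem_univ, true_and]
  exact and_congr_right fun hk => by rw [hxy k hk]

lemma not_ltNode_fin_zero (lab : Fin 0 → ℕ) (ℓ : ℕ) (x y : Fin 0 → ℕ) :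
    ¬ ltNode lab ℓ x y := by
  rintro (⟨k, _⟩ | ⟨_, k, _⟩) <;> exact k.elim0

lemma ltNode_snoc {d : ℕ} {lab : Fin d → ℕ} {ℓ' ℓ : ℕ} {x y : Fin d → ℕ} {a b : ℕ}
    (hlt : ltNode (Fin.snoc lab ℓ') ℓ (Fin.snoc x a) (Fin.snoc y b)) :
    (ℓ' = ℓ ∧ a = 2 ∧ b = 1) ∨
    ((ltNode lab ℓ x y ∨ ∀ k, lab k = ℓ → x k = y k) ∧ (ℓ' = ℓ → a = b)) := by
  rcases hlt with ⟨k₀, hlab, hx, hy, hlater⟩ | ⟨hagree, -⟩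
  · induction k₀ using Fin.lastCases with
    | last =>
      simp only [Fin.snoc_last] at hlab hx hy
      exact Or.inl ⟨hlab, hx, hy⟩
    | cast k₀ =>
      simp only [Fin.snoc_castSucc] at hlab hx hy
      refine Or.inr ⟨Or.inl (Or.inl ⟨k₀, hlab, hx, hy, fun k hk hk' => ?_⟩),
        fun hℓ => ?_⟩
      · simpa using hlater k.castSucc (Fin.castSucc_lt_castSucc_iff.mpr hk) (by simpa using hk')
      · simpa using hlater (Fin.last d) (Fin.castSucc_lt_last k₀) (by simpa using hℓ)
  · refine Or.inr ⟨Or.inr fun k hk => ?_, fun hℓ => ?_⟩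
    · simpa using hagree k.castSucc (by simpa using hk)
    · simpa using hagree (Fin.last d) (by simpa using hℓ)

structure IsACountBalanced {ι : Type*} {d : ℕ} (lab : Fin d → ℕ) (u : ι → Fin d → ℕ) :
    Prop where
  anti : ∀ ℓ i j, ltNode lab ℓ (u i) (u j) → aCount lab ℓ (u j) ≤ aCount lab ℓ (u i)
  spread : ∀ ℓ i j, aCount lab ℓ (u i) ≤ aCount lab ℓ (u j) + 1

namespace IsACountBalanced

variable {ι κ : Type*} {d : ℕ} {lab : Fin d → ℕ} {u : ι → Fin d → ℕ}

lemma comp (hu : IsACountBalanced lab u) (f : κ → ι) : IsACountBalanced lab (u ∘ f) :=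
  ⟨fun ℓ i j => hu.anti ℓ (f i) (f j), fun ℓ i j => hu.spread ℓ (f i) (f j)⟩

lemma of_fin_zero (lab : Fin 0 → ℕ) (u : ι → Fin 0 → ℕ) : IsACountBalanced lab u :=
  ⟨fun ℓ _ _ h => (not_ltNode_fin_zero lab ℓ _ _ h).elim, fun _ _ _ => zero_le_one⟩

lemma aCount_antitone [PartialOrder ι] (hu : IsACountBalanced lab u) {ℓ : ℕ}
    (hsort : ∀ i j, i < j → ltNode lab ℓ (u i) (u j)) :
    Antitone fun i => aCount lab ℓ (u i) := by
  intro i j hij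
  rcases hij.lt_or_eq with hij | rfl
  · exact hu.anti ℓ i j (hsort i j hij)
  · exact le_rfl

lemma snoc (hu : IsACountBalanced lab u) {ℓ' : ℕ} {e : ι → ℕ}
    (hsplit : ∀ i j, e i = 2 → e j ≠ 2 → aCount lab ℓ' (u i) ≤ aCount lab ℓ' (u j)) :
    IsACountBalanced (Fin.snoc lab ℓ') fun i => Fin.snoc (u i) (e i) := by
  refine ⟨fun ℓ i j hlt => ?_, fun ℓ i j => ?_⟩
  · simp only [aCount_snoc] at hlt ⊢
    rcases ltNode_snoc hlt with ⟨rfl, hi, hj⟩ | ⟨hold, hnew⟩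
    · have := hu.spread ℓ' j i
      rw [hi, hj]
      split_ifs <;> omega
    · have hle : aCount lab ℓ (u j) ≤ aCount lab ℓ (u i) :=
        hold.elim (hu.anti ℓ i j) fun hagree => (aCount_congr hagree).ge
      by_cases hℓ : ℓ' = ℓ
      · rw [hnew hℓ]
        omega
      · simp only [hℓ, false_and, if_false]
        omega
  · simp only [aCount_snoc]
    have := hu.spread ℓ i j
    split_ifs with hi hj hj
    · omega
    · obtain ⟨rfl, hi⟩ := hi
      have := hsplit i j hi fun hj' => hj ⟨rfl, hj'⟩
      omega
    all_goals omega

end IsACountBalanced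

theorem Constructible.isACountBalanced {q d : ℕ} {lab : Fin d → ℕ}
    {u : Fin (d + 1) → Fin d → ℕ} (hR : Constructible q d lab u) :
    IsACountBalanced lab u := by
  induction hR with
  | base ℓ =>
    have hlab : (fun _ => ℓ : Fin 1 → ℕ) = Fin.snoc (Fin.elim0 : Fin 0 → ℕ) ℓ := by
      funext k; fin_cases k; rfl
    have hu : ![![1], ![2]] =
        fun i : Fin 2 => Fin.snoc (Fin.elim0 : Fin 0 → ℕ) (![1, 2] i) := by
      funext i k; fin_cases i <;> fin_cases k <;> rfl
    rw [hlab, hu]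
    exact (IsACountBalanced.of_fin_zero _ _).snoc fun _ _ _ _ => le_rfl
  | @step d lab u _ ℓ' _ _ v σ hv hsort h _ hh ih =>
    obtain rfl : v = u ∘ σ := funext hv
    -- the `j`-th new tuple is `(u ∘ σ) (idx j)` with `1` appended below position `h`,
    -- `2` from there on
    let idx (j : Fin (d + 2)) : Fin (d + 1) :=
      if hj : (j : ℕ) < h then ⟨j, by omega⟩ else ⟨j - 1, by omega⟩
    let e (j : Fin (d + 2)) : ℕ := if (j : ℕ) < h then 1 else 2
    have hfamily : (fun j : Fin (d + 2) =>
        if hj : (j : ℕ) < h then Fin.snoc ((u ∘ σ) ⟨j, by omega⟩) 1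
        else Fin.snoc ((u ∘ σ) ⟨(j : ℕ) - 1, by omega⟩) 2) =
        fun j => (Fin.snoc ((u ∘ σ ∘ idx) j) (e j) : Fin (d + 1) → ℕ) := by
      funext j
      by_cases hj : (j : ℕ) < h <;> simp only [hj, idx, e, Function.comp, dif_pos, dif_neg,
        if_true, if_false, not_false_eq_true]
    rw [hfamily]
    refine (ih.comp σ |>.comp idx).snoc fun i j hi hj => (ih.comp σ).aCount_antitone hsort ?_
    have hi' : ¬ (i : ℕ) < h := by simpa [e] using hi
    have hj' : (j : ℕ) < h := by simpa [e] using hj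
    simp only [idx, hi', hj', dif_pos, dif_neg, not_false_eq_true, Fin.mk_le_mk]
    omega

theorem constructible_aCount_anti_general {q d : ℕ}
    {lab : Fin d → ℕ} {u : Fin (d + 1) → Fin d → ℕ}
    (hR : Constructible q d lab u) (ℓ : ℕ)
    (v : Fin (d + 1) → Fin d → ℕ) (σ : Equiv.Perm (Fin (d + 1)))
    (hv : ∀ j, v j = u (σ j))
    (hsort : ∀ i j : Fin (d + 1), i < j → ltNode lab ℓ (v i) (v j)) :
    ∀ j : Fin d, aCount lab ℓ (v j.succ) ≤ aCount lab ℓ (v j.castSucc) := by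
  obtain rfl : v = u ∘ σ := funext hv
  exact fun j => (hR.isACountBalanced.comp σ).aCount_antitone hsort (Fin.castSucc_le_succ j)

/-- If `(v_1,…,v_{d+1})` is the reordering of the tuples of a constructible special point
data that is increasing for `<_ℓ`, then the quantities `a^ℓ_{v_j}(R)` are nonincreasing
in `j`. -/
theorem constructible_aCount_anti {q d : ℕ} (hq : 1 ≤ q) (hd : 1 ≤ d)
    {lab : Fin d → ℕ} {u : Fin (d + 1) → Fin d → ℕ}
    (hR : Constructible q d lab u) (ℓ : ℕ) (hℓ1 : 1 ≤ ℓ) (hℓq : ℓ ≤ q)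
    (v : Fin (d + 1) → Fin d → ℕ) (σ : Equiv.Perm (Fin (d + 1)))
    (hv : ∀ j, v j = u (σ j))
    (hsort : ∀ i j : Fin (d + 1), i < j → ltNode lab ℓ (v i) (v j)) :
    ∀ j : Fin d, aCount lab ℓ (v j.succ) ≤ aCount lab ℓ (v j.castSucc) :=
  constructible_aCount_anti_general hR ℓ v σ hv hsort
end

section
/- Let R = ((ℓ_1,…,ℓ_d),(u_1,…,u_{d+1})) be a constructible special point data of level d with q nodes, and assume u_1, …, u_{d+1} is listed in increasing lexicographic order. Then for every j = 1,…,d one has |a_{u_{j+1}}(R)| − |a_{u_j}(R)| ≤ 1. -/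
/-!
Induct along the construction, following the pairs `a <_lex b` of lexicographically consecutive
tuples. Appending a coordinate keeps the lexicographic order of the old tuples and puts the two
copies of the pivot next to each other. The invariant is that for every such pair either
`|a| = |b|` and `b` is the immediate `<_ℓ`-successor of `a` for every node `ℓ`, or `|b| = |a| + 1`
and there is one node `ℓ₀` for which the pair wraps around (`a` is `<_ℓ₀`-largest and `b`
`<_ℓ₀`-smallest) while `b` is the immediate `<_ℓ`-successor of `a` for every other `ℓ`.
A new coordinate labelled `ℓ` cuts the `<_ℓ`-sorted list at the pivot: a pair that is consecutive
for `<_ℓ` receives equal last digits, so `|b| - |a|` is unchanged; a pair wrapping at `ℓ` receives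
the digits `2` and `1` and becomes consecutive, with difference `0`; and the two copies of the
pivot form a new pair with difference `1` wrapping at `ℓ`.
-/

theorem lexLt_snoc_iff {d : ℕ} {x y : Fin d → ℕ} {e f : ℕ} :
    lexLt (Fin.snoc x e : Fin (d + 1) → ℕ) (Fin.snoc y f) ↔ lexLt x y ∨ x = y ∧ e < f := by
  simp [lexLt, Fin.exists_fin_succ', Fin.forall_fin_succ', funext_iff, Fin.le_last]

theorem ltNode_snoc_self_iff {d : ℕ} {lab : Fin d → ℕ} {ℓ : ℕ} {x y : Fin d → ℕ} {e f : ℕ} :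
    ltNode (Fin.snoc lab ℓ) ℓ (Fin.snoc x e : Fin (d + 1) → ℕ) (Fin.snoc y f) ↔
      e = 2 ∧ f = 1 ∨ e = f ∧ ltNode lab ℓ x y := by
  simp only [ltNode, Fin.exists_fin_succ', Fin.forall_fin_succ', Fin.snoc_castSucc, Fin.snoc_last,
    Fin.castSucc_lt_castSucc_iff, Fin.castSucc_lt_last]
  grind

theorem ltNode_snoc_of_ne_iff {d : ℕ} {lab : Fin d → ℕ} {ℓ ℓ' : ℕ} (h : ℓ' ≠ ℓ)
    {x y : Fin d → ℕ} {e f : ℕ} :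
    ltNode (Fin.snoc lab ℓ) ℓ' (Fin.snoc x e : Fin (d + 1) → ℕ) (Fin.snoc y f) ↔
      ltNode lab ℓ' x y ∨ x = y ∧ e = 1 ∧ f = 2 := by
  simp only [ltNode, Fin.exists_fin_succ', Fin.forall_fin_succ', Fin.snoc_castSucc, Fin.snoc_last,
    Fin.castSucc_lt_castSucc_iff, Fin.castSucc_lt_last, Ne.symm h, funext_iff]
  grind

theorem aTot_snoc {d : ℕ} (x : Fin d → ℕ) (e : ℕ) :
    aTot (Fin.snoc x e : Fin (d + 1) → ℕ) = aTot x + if e = 2 then 1 else 0 := by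
  simp only [aTot, Finset.card_filter, Fin.sum_univ_castSucc, Fin.snoc_castSucc, Fin.snoc_last]

theorem lexLt_asymm {d : ℕ} {x y : Fin d → ℕ} (h : lexLt x y) : ¬ lexLt y x := by
  rintro ⟨k₁, hp₁, hv₁⟩
  obtain ⟨k₀, hp₀, hv₀⟩ := h
  rcases lt_trichotomy k₀ k₁ with hk | rfl | hk
  · have := hp₁ k₀ hk; omega
  · omega
  · have := hp₀ k₁ hk; omega

theorem ltNode_asymm {d : ℕ} {lab : Fin d → ℕ} {ℓ : ℕ} {x y : Fin d → ℕ}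
    (h : ltNode lab ℓ x y) : ¬ ltNode lab ℓ y x := by
  rintro (⟨k₁, hl₁, hy₁, hx₁, ha₁⟩ | ⟨he₁, k₁, hl₁, hy₁, hx₁, ha₁⟩) <;>
    rcases h with ⟨k₀, hl₀, hx₀, hy₀, ha₀⟩ | ⟨he₀, k₀, hl₀, hx₀, hy₀, ha₀⟩
  · rcases lt_trichotomy k₀ k₁ with hk | rfl | hk
    · have := ha₀ k₁ hk hl₁; omega
    · omega
    · have := ha₁ k₀ hk hl₀; omega
  · have := he₀ k₁ hl₁; omega
  · have := he₁ k₀ hl₀; omega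
  · rcases lt_trichotomy k₀ k₁ with hk | rfl | hk
    · have := ha₁ k₀ hk; omega
    · omega
    · have := ha₀ k₁ hk; omega

instance {d : ℕ} : Std.Asymm (lexLt (d := d)) := ⟨fun _ _ => lexLt_asymm⟩

instance {d : ℕ} (lab : Fin d → ℕ) (ℓ : ℕ) : Std.Asymm (ltNode lab ℓ) := ⟨fun _ _ => ltNode_asymm⟩

section Cover

variable {α : Type*}

def IsCover (S : Set α) (r : α → α → Prop) (a b : α) : Prop :=
  r a b ∧ ∀ c ∈ S, r a c → ¬ r c b

def IsMaxMin (S : Set α) (r : α → α → Prop) (a b : α) : Prop :=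
  (∀ c ∈ S, c ≠ a → r c a) ∧ ∀ c ∈ S, c ≠ b → r b c

variable {S : Set α} {r : α → α → Prop} [Std.Asymm r] {a b c : α}

theorem IsMaxMin.not_rel_left (h : IsMaxMin S r a b) (hc : c ∈ S) :
    ¬ r a c := by
  by_cases hca : c = a
  · subst hca; exact irrefl c
  · exact asymm (h.1 c hc hca)

theorem IsMaxMin.not_rel_right (h : IsMaxMin S r a b) (hc : c ∈ S) :
    ¬ r c b := by
  by_cases hcb : c = b
  · subst hcb; exact irrefl c
  · exact fun hcb' => asymm hcb' (h.2 c hc hcb)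

variable {n : ℕ} {v : Fin n → α}

theorem rel_iff_lt_of_sorted (hv : ∀ i j, i < j → r (v i) (v j)) {i j : Fin n} :
    r (v i) (v j) ↔ i < j := by
  refine ⟨fun h => ?_, hv i j⟩
  rcases lt_trichotomy i j with hij | rfl | hij
  · exact hij
  · exact absurd h (irrefl _)
  · exact absurd h (asymm (hv j i hij))

theorem injective_of_sorted (hv : ∀ i j, i < j → r (v i) (v j)) : Function.Injective v := by
  intro i j h
  rcases lt_trichotomy i j with hij | rfl | hij
  · exact absurd (h ▸ hv i j hij) (irrefl _)
  · rfl
  · exact absurd (h ▸ hv j i hij) (irrefl _)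

theorem isCover_range_iff_of_sorted (hv : ∀ i j, i < j → r (v i) (v j)) {i j : Fin n} :
    IsCover (Set.range v) r (v i) (v j) ↔ (j : ℕ) = i + 1 := by
  simp only [IsCover, Set.forall_mem_range, rel_iff_lt_of_sorted hv, Fin.lt_def]
  constructor
  · rintro ⟨hij, hbetween⟩
    by_contra hne
    exact hbetween ⟨i + 1, by omega⟩ (by simp) (by simp; omega)
  · intro hj
    exact ⟨by omega, fun k hik hkj => by omega⟩

theorem IsMaxMin.of_sorted (hv : ∀ i j, i < j → r (v i) (v j)) {i j : Fin n}
    (h : IsMaxMin (Set.range v) r (v i) (v j)) :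
    (∀ k, k ≤ i) ∧ ∀ k, j ≤ k := by
  have hinj := injective_of_sorted hv
  refine ⟨fun k => ?_, fun k => ?_⟩
  · by_cases hk : k = i
    · exact hk.le
    · exact ((rel_iff_lt_of_sorted hv).1 (h.1 _ ⟨k, rfl⟩ (hinj.ne hk))).le
  · by_cases hk : k = j
    · exact hk.ge
    · exact ((rel_iff_lt_of_sorted hv).1 (h.2 _ ⟨k, rfl⟩ (hinj.ne hk))).le

end Cover

section Extension

variable {d : ℕ} {lab : Fin d → ℕ} {ℓ ℓ' : ℕ} {S : Set (Fin d → ℕ)}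
  {S' : Set (Fin (d + 1) → ℕ)} {A B : Fin d → ℕ} {e f : ℕ}

def extensions (S : Set (Fin d → ℕ)) : Set (Fin (d + 1) → ℕ) :=
  {x | ∃ y ∈ S, ∃ e, (e = 1 ∨ e = 2) ∧ x = Fin.snoc y e}

theorem IsCover.of_snoc_lexLt (hcopy : ∀ y ∈ S, ∃ e, Fin.snoc y e ∈ S')
    (h : IsCover S' lexLt (Fin.snoc A e) (Fin.snoc B f)) (hAB : A ≠ B) :
    IsCover S lexLt A B := by
  refine ⟨(lexLt_snoc_iff.1 h.1).resolve_right (fun h' => hAB h'.1), fun C hC hAC hCB => ?_⟩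
  obtain ⟨g, hg⟩ := hcopy C hC
  exact h.2 _ hg (lexLt_snoc_iff.2 (Or.inl hAC)) (lexLt_snoc_iff.2 (Or.inl hCB))

theorem IsCover.le_of_snoc_lexLt_left (h : IsCover S' lexLt (Fin.snoc A e) (Fin.snoc B f))
    (hAB : A ≠ B) {e' : ℕ} (he' : Fin.snoc A e' ∈ S') : e' ≤ e := by
  have hlex : lexLt A B := (lexLt_snoc_iff.1 h.1).resolve_right (fun h' => hAB h'.1)
  by_contra! hlt
  exact h.2 _ he' (lexLt_snoc_iff.2 (Or.inr ⟨rfl, hlt⟩)) (lexLt_snoc_iff.2 (Or.inl hlex))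

theorem IsCover.le_of_snoc_lexLt_right (h : IsCover S' lexLt (Fin.snoc A e) (Fin.snoc B f))
    (hAB : A ≠ B) {f' : ℕ} (hf' : Fin.snoc B f' ∈ S') : f ≤ f' := by
  have hlex : lexLt A B := (lexLt_snoc_iff.1 h.1).resolve_right (fun h' => hAB h'.1)
  by_contra! hlt
  exact h.2 _ hf' (lexLt_snoc_iff.2 (Or.inl hlex)) (lexLt_snoc_iff.2 (Or.inr ⟨rfl, hlt⟩))

theorem IsCover.snoc_ltNode (hS' : S' ⊆ extensions S) (hAB : IsCover S (ltNode lab ℓ') A B)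
    (hA : Fin.snoc A 2 ∈ S' → e = 2) (hB : Fin.snoc B 1 ∈ S' → f = 1) (hef : ℓ' = ℓ → e = f) :
    IsCover S' (ltNode (Fin.snoc lab ℓ) ℓ') (Fin.snoc A e) (Fin.snoc B f) := by
  by_cases hℓ : ℓ' = ℓ
  · subst hℓ
    obtain rfl := hef rfl
    refine ⟨ltNode_snoc_self_iff.2 (Or.inr ⟨rfl, hAB.1⟩), fun c hc => ?_⟩
    obtain ⟨C, hC, g, -, rfl⟩ := hS' hc
    rw [ltNode_snoc_self_iff, ltNode_snoc_self_iff]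
    rintro (⟨he, hg⟩ | ⟨rfl, hAC⟩) (⟨hg', he'⟩ | ⟨hge, hCB⟩)
    · omega
    · omega
    · omega
    · exact hAB.2 C hC hAC hCB
  · refine ⟨(ltNode_snoc_of_ne_iff hℓ).2 (Or.inl hAB.1), fun c hc => ?_⟩
    obtain ⟨C, hC, g, -, rfl⟩ := hS' hc
    rw [ltNode_snoc_of_ne_iff hℓ, ltNode_snoc_of_ne_iff hℓ]
    rintro (hAC | ⟨rfl, he, rfl⟩) (hCB | ⟨rfl, hg, hf⟩)
    · exact hAB.2 C hC hAC hCB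
    · subst hg; exact absurd (hB hc) (by omega)
    · exact absurd (hA hc) (by omega)
    · omega

theorem IsMaxMin.isCover_snoc (hS' : S' ⊆ extensions S) (hAB : IsMaxMin S (ltNode lab ℓ) A B) :
    IsCover S' (ltNode (Fin.snoc lab ℓ) ℓ) (Fin.snoc A 2) (Fin.snoc B 1) := by
  refine ⟨ltNode_snoc_self_iff.2 (Or.inl ⟨rfl, rfl⟩), fun c hc => ?_⟩
  obtain ⟨C, hC, g, -, rfl⟩ := hS' hc
  rw [ltNode_snoc_self_iff, ltNode_snoc_self_iff]
  rintro (⟨-, rfl⟩ | ⟨rfl, hAC⟩) (⟨h₁, -⟩ | ⟨h₁, hCB⟩)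
  · omega
  · exact hAB.not_rel_right hC hCB
  · exact hAB.not_rel_left hC hAC
  · omega

theorem IsMaxMin.snoc_of_ne (hS' : S' ⊆ extensions S) (hℓ : ℓ' ≠ ℓ)
    (hAB : IsMaxMin S (ltNode lab ℓ') A B) (he : e = 1 ∨ e = 2) (hf : f = 1 ∨ f = 2)
    (hA : Fin.snoc A 2 ∈ S' → e = 2) (hB : Fin.snoc B 1 ∈ S' → f = 1) :
    IsMaxMin S' (ltNode (Fin.snoc lab ℓ) ℓ') (Fin.snoc A e) (Fin.snoc B f) := by
  constructor
  · intro c hc hne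
    obtain ⟨C, hC, g, hg, rfl⟩ := hS' hc
    rw [ltNode_snoc_of_ne_iff hℓ]
    by_cases hCA : C = A
    · subst hCA
      have hge : g ≠ e := fun hge => hne (by rw [hge])
      have := fun hg2 : g = 2 => hA (hg2 ▸ hc)
      exact Or.inr ⟨rfl, by omega, by omega⟩
    · exact Or.inl (hAB.1 C hC hCA)
  · intro c hc hne
    obtain ⟨C, hC, g, hg, rfl⟩ := hS' hc
    rw [ltNode_snoc_of_ne_iff hℓ]
    by_cases hCB : C = B
    · subst hCB
      have hgf : g ≠ f := fun hgf => hne (by rw [hgf])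
      have := fun hg1 : g = 1 => hB (hg1 ▸ hc)
      exact Or.inr ⟨rfl, by omega, by omega⟩
    · exact Or.inl (hAB.2 C hC hCB)

theorem isCover_snoc_one_two (hS' : S' ⊆ extensions S) (hℓ : ℓ' ≠ ℓ) :
    IsCover S' (ltNode (Fin.snoc lab ℓ) ℓ') (Fin.snoc A 1) (Fin.snoc A 2) := by
  refine ⟨(ltNode_snoc_of_ne_iff hℓ).2 (Or.inr ⟨rfl, rfl, rfl⟩), fun c hc => ?_⟩
  obtain ⟨C, -, g, -, rfl⟩ := hS' hc
  rw [ltNode_snoc_of_ne_iff hℓ, ltNode_snoc_of_ne_iff hℓ]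
  rintro (hAC | ⟨rfl, -, hg⟩) (hCA | ⟨hCA, hg', -⟩)
  · exact asymm hAC hCA
  · subst hCA; exact irrefl _ hAC
  · exact irrefl _ hCA
  · omega

end Extension

section Invariant

variable {d : ℕ}

def FlatStep (lab : Fin d → ℕ) (S : Set (Fin d → ℕ)) (a b : Fin d → ℕ) : Prop :=
  aTot b = aTot a ∧ ∀ ℓ, IsCover S (ltNode lab ℓ) a b

def WrapStep (lab : Fin d → ℕ) (S : Set (Fin d → ℕ)) (a b : Fin d → ℕ) : Prop :=
  aTot b = aTot a + 1 ∧
    ∃ ℓ₀, IsMaxMin S (ltNode lab ℓ₀) a b ∧ ∀ ℓ ≠ ℓ₀, IsCover S (ltNode lab ℓ) a b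

def LexCoverInvariant (lab : Fin d → ℕ) (S : Set (Fin d → ℕ)) : Prop :=
  ∀ a ∈ S, ∀ b ∈ S, IsCover S lexLt a b → FlatStep lab S a b ∨ WrapStep lab S a b

end Invariant

section Doubling

variable {n d : ℕ} {lab : Fin d → ℕ} {ℓ : ℕ} {v : Fin n → Fin d → ℕ} {p : Fin n}

/-- The tuples `v₀·1, …, v_p·1, v_p·2, …, v_{n-1}·2` of a construction step, where `v` is sorted
for the new node and `p = h - 1` is the (0-based) index of the pivot. -/
def doubling (v : Fin n → Fin d → ℕ) (p : Fin n) : Set (Fin (d + 1) → ℕ) :=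
  {x | ∃ m e, (m ≤ p ∧ e = 1 ∨ p ≤ m ∧ e = 2) ∧ x = Fin.snoc (v m) e}

theorem doubling_subset_extensions : doubling v p ⊆ extensions (Set.range v) := by
  rintro _ ⟨m, e, he, rfl⟩
  exact ⟨v m, ⟨m, rfl⟩, e, by omega, rfl⟩

theorem exists_snoc_mem_doubling : ∀ y ∈ Set.range v, ∃ e, Fin.snoc y e ∈ doubling v p := by
  rintro _ ⟨m, rfl⟩
  rcases le_total m p with h | h
  · exact ⟨1, m, 1, Or.inl ⟨h, rfl⟩, rfl⟩
  · exact ⟨2, m, 2, Or.inr ⟨h, rfl⟩, rfl⟩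

theorem snoc_mem_doubling_iff (hv : Function.Injective v) {m : Fin n} {e : ℕ} :
    Fin.snoc (v m) e ∈ doubling v p ↔ m ≤ p ∧ e = 1 ∨ p ≤ m ∧ e = 2 := by
  refine ⟨?_, fun h => ⟨m, e, h, rfl⟩⟩
  rintro ⟨m', e', he', h⟩
  obtain ⟨hm, rfl⟩ := Fin.snoc_inj.1 h
  rwa [hv hm]

theorem isMaxMin_doubling_pivot (hsort : ∀ i j, i < j → ltNode lab ℓ (v i) (v j)) :
    IsMaxMin (doubling v p) (ltNode (Fin.snoc lab ℓ) ℓ) (Fin.snoc (v p) 1) (Fin.snoc (v p) 2) := by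
  constructor
  · rintro _ ⟨m, e, ⟨hm, rfl⟩ | ⟨-, rfl⟩, rfl⟩ hne
    · refine ltNode_snoc_self_iff.2 (Or.inr ⟨rfl, hsort m p (lt_of_le_of_ne hm ?_)⟩)
      rintro rfl; exact hne rfl
    · exact ltNode_snoc_self_iff.2 (Or.inl ⟨rfl, rfl⟩)
  · rintro _ ⟨m, e, ⟨-, rfl⟩ | ⟨hm, rfl⟩, rfl⟩ hne
    · exact ltNode_snoc_self_iff.2 (Or.inl ⟨rfl, rfl⟩)
    · refine ltNode_snoc_self_iff.2 (Or.inr ⟨rfl, hsort p m (lt_of_le_of_ne hm ?_)⟩)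
      rintro rfl; exact hne rfl

theorem LexCoverInvariant.doubling_of_ne (hsort : ∀ i j, i < j → ltNode lab ℓ (v i) (v j))
    (hinv : LexCoverInvariant lab (Set.range v)) {i j : Fin n} {e f : ℕ}
    (he : i ≤ p ∧ e = 1 ∨ p ≤ i ∧ e = 2) (hf : j ≤ p ∧ f = 1 ∨ p ≤ j ∧ f = 2) (hij : i ≠ j)
    (hcov : IsCover (doubling v p) lexLt (Fin.snoc (v i) e) (Fin.snoc (v j) f)) :
    FlatStep (Fin.snoc lab ℓ) (doubling v p) (Fin.snoc (v i) e) (Fin.snoc (v j) f) ∨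
      WrapStep (Fin.snoc lab ℓ) (doubling v p) (Fin.snoc (v i) e) (Fin.snoc (v j) f) := by
  have hinj := injective_of_sorted hsort
  have hS' : doubling v p ⊆ extensions (Set.range v) := doubling_subset_extensions
  have hA : Fin.snoc (v i) 2 ∈ doubling v p → e = 2 := fun h => by
    have := hcov.le_of_snoc_lexLt_left (hinj.ne hij) h; omega
  have hB : Fin.snoc (v j) 1 ∈ doubling v p → f = 1 := fun h => by
    have := hcov.le_of_snoc_lexLt_right (hinj.ne hij) h; omega
  have hA' : p ≤ i → e = 2 := fun h => hA ((snoc_mem_doubling_iff hinj).2 (Or.inr ⟨h, rfl⟩))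
  have hB' : j ≤ p → f = 1 := fun h => hB ((snoc_mem_doubling_iff hinj).2 (Or.inl ⟨h, rfl⟩))
  have hlift : ∀ ℓ', (ℓ' = ℓ → e = f) → IsCover (Set.range v) (ltNode lab ℓ') (v i) (v j) →
      IsCover (doubling v p) (ltNode (Fin.snoc lab ℓ) ℓ') (Fin.snoc (v i) e) (Fin.snoc (v j) f) :=
    fun ℓ' hef h => h.snoc_ltNode hS' hA hB hef
  have hsucc : IsCover (Set.range v) (ltNode lab ℓ) (v i) (v j) → e = f := fun h => by
    have := (isCover_range_iff_of_sorted hsort).1 h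
    rw [Fin.le_def] at he hf hA' hB'
    omega
  rcases hinv _ ⟨i, rfl⟩ _ ⟨j, rfl⟩ (hcov.of_snoc_lexLt exists_snoc_mem_doubling (hinj.ne hij))
    with ⟨htot, hcovs⟩ | ⟨htot, ℓ₀, hmm, hcovs⟩
  · have hef := hsucc (hcovs ℓ)
    exact Or.inl ⟨by simp [aTot_snoc, htot, hef], fun ℓ' => hlift ℓ' (fun _ => hef) (hcovs ℓ')⟩
  · by_cases hℓ₀ : ℓ₀ = ℓ
    · subst hℓ₀
      obtain ⟨hi, hj⟩ := hmm.of_sorted hsort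
      obtain ⟨rfl, rfl⟩ : e = 2 ∧ f = 1 := ⟨hA' (hi p), hB' (hj p)⟩
      refine Or.inl ⟨by simp [aTot_snoc, htot], fun ℓ' => ?_⟩
      by_cases hℓ' : ℓ' = ℓ₀
      · subst hℓ'; exact hmm.isCover_snoc hS'
      · exact hlift ℓ' (absurd · hℓ') (hcovs ℓ' hℓ')
    · have hef := hsucc (hcovs ℓ (Ne.symm hℓ₀))
      exact Or.inr ⟨by rw [aTot_snoc, aTot_snoc, htot, hef]; ring, ℓ₀,
        hmm.snoc_of_ne hS' hℓ₀ (by omega) (by omega) hA hB,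
        fun ℓ' hℓ' => hlift ℓ' (fun _ => hef) (hcovs ℓ' hℓ')⟩

theorem LexCoverInvariant.doubling (hsort : ∀ i j, i < j → ltNode lab ℓ (v i) (v j))
    (hinv : LexCoverInvariant lab (Set.range v)) (p : Fin n) :
    LexCoverInvariant (Fin.snoc lab ℓ) (doubling v p) := by
  rintro _ ⟨i, e, he, rfl⟩ _ ⟨j, f, hf, rfl⟩ hcov
  by_cases hij : i = j
  · subst hij
    have hef : e < f := ((lexLt_snoc_iff.1 hcov.1).resolve_left (irrefl _)).2
    obtain ⟨rfl, rfl, rfl⟩ : i = p ∧ e = 1 ∧ f = 2 := by omega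
    exact Or.inr ⟨by simp [aTot_snoc], ℓ, isMaxMin_doubling_pivot hsort,
      fun ℓ' hℓ' => isCover_snoc_one_two doubling_subset_extensions hℓ'⟩
  · exact hinv.doubling_of_ne hsort he hf hij hcov

end Doubling

theorem range_snoc_dite_eq_doubling {d h : ℕ} (hh1 : 1 ≤ h) (hh2 : h ≤ d + 1)
    (v : Fin (d + 1) → Fin d → ℕ) :
    Set.range (fun j : Fin (d + 2) =>
        if hj : (j : ℕ) < h then Fin.snoc (v ⟨(j : ℕ), by omega⟩) 1
        else Fin.snoc (v ⟨(j : ℕ) - 1, by omega⟩) 2 : Fin (d + 2) → Fin (d + 1) → ℕ) =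
      doubling v ⟨h - 1, by omega⟩ := by
  ext x
  constructor
  · rintro ⟨j, rfl⟩
    by_cases hj : (j : ℕ) < h
    · exact ⟨_, 1, Or.inl ⟨by rw [Fin.le_def]; simp only; omega, rfl⟩, dif_pos hj⟩
    · exact ⟨_, 2, Or.inr ⟨by rw [Fin.le_def]; simp only; omega, rfl⟩, dif_neg hj⟩
  · rintro ⟨m, e, ⟨hm, rfl⟩ | ⟨hm, rfl⟩, rfl⟩ <;> rw [Fin.le_def] at hm <;> simp only at hm
    · exact ⟨⟨m, by omega⟩, by simp only; rw [dif_pos (by omega)]⟩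
    · exact ⟨⟨m + 1, by omega⟩, by simp only; rw [dif_neg (by omega)]; simp⟩

theorem lexCoverInvariant_zero (lab : Fin 0 → ℕ) (S : Set (Fin 0 → ℕ)) :
    LexCoverInvariant lab S :=
  fun _ _ _ _ h => h.1.elim fun k => k.elim0

theorem Constructible.lexCoverInvariant {q d : ℕ} {lab : Fin d → ℕ}
    {u : Fin (d + 1) → Fin d → ℕ} (hR : Constructible q d lab u) :
    LexCoverInvariant lab (Set.range u) := by
  induction hR with
  | base ℓ =>
    -- the base datum is the doubling of the unique tuple of length `0`
    have := (lexCoverInvariant_zero Fin.elim0 _).doubling (ℓ := ℓ)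
      (v := fun _ : Fin 1 => Fin.elim0) (fun i j hij => absurd hij (by omega)) 0
    convert this using 1
    · funext i
      simp [Fin.snoc, Fin.fin_one_eq_zero i]
    · ext x
      simp [doubling, Matrix.range_cons, funext_iff, Fin.forall_fin_one, Fin.snoc, or_comm]
  | @step d lab u _ ℓ _ _ v σ hv hsort h hh1 hh2 ih =>
    rw [range_snoc_dite_eq_doubling hh1 hh2]
    have hrange : Set.range v = Set.range u := by
      rw [show v = u ∘ σ from funext hv, EquivLike.range_comp]
    exact (hrange ▸ ih).doubling hsort _

theorem constructible_aTot_step_general {q d : ℕ}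
    {lab : Fin d → ℕ} {u : Fin (d + 1) → Fin d → ℕ}
    (hR : Constructible q d lab u)
    (hlex : ∀ i j : Fin (d + 1), i < j → lexLt (u i) (u j)) :
    ∀ j : Fin d, (aTot (u j.succ) : ℤ) - (aTot (u j.castSucc) : ℤ) ≤ 1 := by
  intro j
  have hcov : IsCover (Set.range u) lexLt (u j.castSucc) (u j.succ) :=
    (isCover_range_iff_of_sorted hlex).2 (by simp)
  rcases hR.lexCoverInvariant _ ⟨_, rfl⟩ _ ⟨_, rfl⟩ hcov with ⟨h, -⟩ | ⟨h, -⟩ <;> omega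

/-- If the tuples of a constructible special point data are listed in increasing
lexicographic order, then `|a_{u_{j+1}}(R)| − |a_{u_j}(R)| ≤ 1` for every `j`. -/
theorem constructible_aTot_step {q d : ℕ} (hq : 1 ≤ q) (hd : 1 ≤ d)
    {lab : Fin d → ℕ} {u : Fin (d + 1) → Fin d → ℕ}
    (hR : Constructible q d lab u)
    (hlex : ∀ i j : Fin (d + 1), i < j → lexLt (u i) (u j)) :
    ∀ j : Fin d, (aTot (u j.succ) : ℤ) - (aTot (u j.castSucc) : ℤ) ≤ 1 :=
  constructible_aTot_step_general hR hlex
end
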